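/- Fix d ≥ 2, 0 < β ≤ 1, and Q > 0. If f: [0,1]^d → ℝ satisfies |f(x) − f(y)| ≤ Q ‖x − y‖_∞^β for all x, y ∈ [0,1]^d, then the outer function g = f ∘ Φ^{-1} of the Cantor-set KA representation satisfies |g(x) − g(y)| ≤ 2^β Q |x − y|^{β log 2/(d log 3)} for all x, y in the image of Φ. -/

import Mathlib

/-!
The ternary digit of `Φ(x)` in position `j d + p` is `2 a_j^{x_p}`: `Φ` interleaves the binary
expansions of the coordinates into an expansion with digits in `{0, 2}`. If the first such digit
where `Φ(x)` and `Φ(y)` differ is the `m`-th, then `|Φ(x) - Φ(y)| ≥ 3^{-(m+1)}`, because that digit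
contributes `2 · 3^{-(m+1)}` and the remaining ones at most `3^{-(m+1)}`. On the other hand each pair
of coordinates shares its first `⌊m/d⌋` binary digits, so
`|x_p - y_p| ≤ 2^{-⌊m/d⌋} ≤ 2 · (3^{-(m+1)})^{log 2 / (d log 3)}`. Composing this Hölder bound for
`Φ⁻¹` with that of `f` gives the claim.
-/

open Set Filter Topology MeasureTheory

noncomputable section

/-- The unit cube `[0,1]^d`. -/
def cube (d : ℕ) : Set (Fin d → ℝ) := {x | ∀ p, x p ∈ Set.Icc (0:ℝ) 1}

/-- The Cantor middle-thirds set: reals admitting a ternary expansion with digits in `{0,2}`. -/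
def CantorSet : Set ℝ :=
  {y | ∃ t : ℕ → ℕ, (∀ j, t j = 0 ∨ t j = 2) ∧ y = ∑' j : ℕ, (t j : ℝ) / 3 ^ (j + 1)}

/-- `a` assigns to each `x ∈ [0,1]` a fixed binary expansion (`a x j` is the digit `a_{j+1}^x`). -/
def IsBinaryExp (a : ℝ → ℕ → ℕ) : Prop :=
  ∀ x ∈ Set.Icc (0:ℝ) 1, (∀ j, a x j ≤ 1) ∧ x = ∑' j : ℕ, (a x j : ℝ) / 2 ^ (j + 1)

/-- `φ(x) = ∑_{j≥1} 2 a_j^x 3^{-d(j-1)}`. -/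
def phiFun (d : ℕ) (a : ℝ → ℕ → ℕ) (x : ℝ) : ℝ := ∑' j : ℕ, (2 * a x j : ℝ) / 3 ^ (d * j)

/-- `Φ(x_1,…,x_d) = ∑_{p=1}^d 3^{-p} φ(x_p)`. -/
def PhiFun (d : ℕ) (a : ℝ → ℕ → ℕ) (x : Fin d → ℝ) : ℝ :=
  ∑ p : Fin d, phiFun d a (x p) / 3 ^ ((p : ℕ) + 1)

section DigitExpansion

variable {b C : ℝ} {c : ℕ → ℝ}

lemma hasSum_div_pow_add (hb : 1 < b) (C : ℝ) (J : ℕ) :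
    HasSum (fun k : ℕ => C / b ^ (k + J + 1)) (C / (b - 1) / b ^ J) := by
  have hb0 : 0 < b := by linarith
  have hgeom := (hasSum_geometric_of_lt_one (inv_nonneg.2 hb0.le)
    (inv_lt_one_of_one_lt₀ hb)).mul_left (C / b ^ (J + 1))
  have hterm : (fun k : ℕ => C / b ^ (k + J + 1)) = fun k => C / b ^ (J + 1) * b⁻¹ ^ k := by
    ext k
    rw [inv_pow, add_assoc, pow_add]
    field_simp
  have hsum : C / (b - 1) / b ^ J = C / b ^ (J + 1) * (1 - b⁻¹)⁻¹ := by
    have : b - 1 ≠ 0 := by linarith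
    rw [pow_succ]
    field_simp
  rwa [hterm, hsum]

lemma summable_div_pow_of_abs_le (hb : 1 < b) (hc : ∀ k, |c k| ≤ C) :
    Summable fun k => c k / b ^ (k + 1) := by
  refine (hasSum_div_pow_add hb C 0).summable.of_norm_bounded fun k => ?_
  have : 0 < b := by linarith
  rw [Real.norm_eq_abs, abs_div, abs_of_pos (by positivity : (0:ℝ) < b ^ (k + 1))]
  gcongr
  exact hc k

lemma abs_tsum_div_pow_le (hb : 1 < b) (hc : ∀ k, |c k| ≤ C) {J : ℕ}
    (hJ : ∀ k < J, c k = 0) : |∑' k, c k / b ^ (k + 1)| ≤ C / (b - 1) / b ^ J := by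
  rw [← (summable_div_pow_of_abs_le hb hc).sum_add_tsum_nat_add J,
    Finset.sum_eq_zero fun k hk => by rw [hJ k (Finset.mem_range.1 hk), zero_div], zero_add,
    ← Real.norm_eq_abs]
  refine tsum_of_norm_bounded (hasSum_div_pow_add hb C J) fun k => ?_
  have : 0 < b := by linarith
  rw [Real.norm_eq_abs, abs_div, abs_of_pos (by positivity : (0:ℝ) < b ^ (k + J + 1))]
  gcongr
  exact hc _

lemma le_abs_tsum_div_pow (hb : 1 < b) (hc : ∀ k, |c k| ≤ C) {m : ℕ}
    (hm : ∀ k < m, c k = 0) :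
    (|c m| - C / (b - 1)) / b ^ (m + 1) ≤ |∑' k, c k / b ^ (k + 1)| := by
  classical
  have hC : 0 ≤ C := (abs_nonneg _).trans (hc 0)
  set c' : ℕ → ℝ := fun k => if k = m then 0 else c k
  have htail : |∑' k, c' k / b ^ (k + 1)| ≤ C / (b - 1) / b ^ (m + 1) := by
    refine abs_tsum_div_pow_le hb (fun k => ?_) fun k hk => ?_
    · by_cases h : k = m <;> simp [c', h, hC, hc k]
    · by_cases h : k = m
      · simp [c', h]
      · simp [c', h, hm k (by omega)]
  have hsplit : ∑' k, c k / b ^ (k + 1) = c m / b ^ (m + 1) + ∑' k, c' k / b ^ (k + 1) := by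
    rw [(summable_div_pow_of_abs_le hb hc).tsum_eq_add_tsum_ite m]
    congr 1
    exact tsum_congr fun k => by by_cases h : k = m <;> simp [c', h]
  have hbm : 0 < b ^ (m + 1) := pow_pos (by linarith) _
  calc (|c m| - C / (b - 1)) / b ^ (m + 1)
      = |c m / b ^ (m + 1)| - C / (b - 1) / b ^ (m + 1) := by rw [abs_div, abs_of_pos hbm, sub_div]
    _ ≤ |c m / b ^ (m + 1)| - |∑' k, c' k / b ^ (k + 1)| := by gcongr
    _ ≤ |c m / b ^ (m + 1) + ∑' k, c' k / b ^ (k + 1)| := abs_sub_abs_le_abs_add _ _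
    _ = |∑' k, c k / b ^ (k + 1)| := by rw [hsplit]

lemma tsum_natCast_div_pow_sub (hb : 1 < b) {s t : ℕ → ℕ} {N : ℕ} (hs : ∀ k, s k ≤ N)
    (ht : ∀ k, t k ≤ N) :
    ∑' k, (s k : ℝ) / b ^ (k + 1) - ∑' k, (t k : ℝ) / b ^ (k + 1) =
      ∑' k, ((s k : ℝ) - t k) / b ^ (k + 1) := by
  have hbound (u : ℕ → ℕ) (hu : ∀ k, u k ≤ N) (k : ℕ) : |(u k : ℝ)| ≤ N := by
    rw [Nat.abs_cast]
    exact_mod_cast hu k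
  rw [← (summable_div_pow_of_abs_le hb (hbound s hs)).tsum_sub
    (summable_div_pow_of_abs_le hb (hbound t ht))]
  exact tsum_congr fun k => (sub_div _ _ _).symm

lemma abs_natCast_sub_le {s t N : ℕ} (hs : s ≤ N) (ht : t ≤ N) : |(s : ℝ) - t| ≤ N :=
  abs_sub_le_of_nonneg_of_le (Nat.cast_nonneg _) (by exact_mod_cast hs) (Nat.cast_nonneg _)
    (by exact_mod_cast ht)

end DigitExpansion

lemma abs_sub_le_of_binaryDigit_eq {a : ℝ → ℕ → ℕ} (ha : IsBinaryExp a) {x y : ℝ}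
    (hx : x ∈ Icc 0 1) (hy : y ∈ Icc 0 1) {J : ℕ} (h : ∀ j < J, a x j = a y j) :
    |x - y| ≤ (1 / 2) ^ J := by
  have hdiff := abs_tsum_div_pow_le (b := 2) (c := fun k => (a x k : ℝ) - a y k) one_lt_two
    (fun k => abs_natCast_sub_le ((ha x hx).1 k) ((ha y hy).1 k))
    fun j hj => by rw [h j hj, sub_self]
  rw [← tsum_natCast_div_pow_sub one_lt_two (ha x hx).1 (ha y hy).1, ← (ha x hx).2,
    ← (ha y hy).2] at hdiff
  norm_num at hdiff
  rwa [one_div_pow, one_div]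

lemma half_pow_div_le {d : ℕ} (hd : 0 < d) (m : ℕ) :
    (1 / 2 : ℝ) ^ (m / d) ≤ 2 * ((1 / 3 : ℝ) ^ (m + 1)) ^ (Real.log 2 / (d * Real.log 3)) := by
  have hdR : (0 : ℝ) < d := by exact_mod_cast hd
  have hlog2 : 0 < Real.log 2 := Real.log_pos one_lt_two
  have hlog3 : 0 < Real.log 3 := Real.log_pos (by norm_num)
  have hm : m + 1 ≤ (m / d + 1) * d := by
    rw [add_mul, one_mul]
    exact Nat.lt_div_mul_add hd
  rw [← Real.log_le_log_iff (by positivity) (by positivity), Real.log_mul two_ne_zero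
    (by positivity), Real.log_rpow (by positivity), Real.log_pow, Real.log_pow, one_div,
    one_div, Real.log_inv, Real.log_inv]
  have hexp : Real.log 2 / (d * Real.log 3) * ((m + 1 : ℕ) * -Real.log 3) =
      -((m + 1) * Real.log 2 / d) := by
    push_cast
    field_simp
  have hscale : (m + 1) * Real.log 2 / d ≤ ((m / d : ℕ) + 1) * Real.log 2 := by
    rw [div_le_iff₀ hdR]
    have : (m : ℝ) + 1 ≤ ((m / d : ℕ) + 1) * d := by exact_mod_cast hm
    nlinarith
  rw [hexp]
  linarith

section CantorDigits

variable {d : ℕ} [NeZero d] {a : ℝ → ℕ → ℕ} {x y : Fin d → ℝ}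

def cantorDigit (d : ℕ) [NeZero d] (a : ℝ → ℕ → ℕ) (x : Fin d → ℝ) (m : ℕ) : ℕ :=
  2 * a (x (Fin.ofNat d m)) (m / d)

lemma cantorDigit_mul_add (j : ℕ) (p : Fin d) : cantorDigit d a x (j * d + p) = 2 * a (x p) j := by
  have h := (Nat.divModEquiv d).apply_symm_apply (j, p)
  simp only [Nat.divModEquiv, Equiv.coe_fn_mk, Equiv.coe_fn_symm_mk, Prod.mk.injEq] at h
  rw [cantorDigit, h.1, h.2]

lemma cantorDigit_le (hx : ∀ p j, a (x p) j ≤ 1) (m : ℕ) : cantorDigit d a x m ≤ 2 := by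
  have := hx (Fin.ofNat d m) (m / d)
  unfold cantorDigit
  omega

lemma PhiFun_eq_tsum_cantorDigit (hx : ∀ p j, a (x p) j ≤ 1) :
    PhiFun d a x = ∑' m, (cantorDigit d a x m : ℝ) / 3 ^ (m + 1) := by
  set F : ℕ → ℝ := fun m => (cantorDigit d a x m : ℝ) / 3 ^ (m + 1)
  have hF : Summable F := summable_div_pow_of_abs_le (C := 2) (by norm_num) fun m => by
    rw [Nat.abs_cast]
    exact_mod_cast cantorDigit_le hx m
  let e : Fin d × ℕ ≃ ℕ := (Equiv.prodComm _ _).trans (Nat.divModEquiv d).symm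
  have hFe : Summable (F ∘ e) := e.summable_iff.2 hF
  rw [← e.tsum_eq F]
  change _ = ∑' q, (F ∘ e) q
  rw [hFe.tsum_prod' hFe.prod_factor, tsum_fintype, PhiFun]
  refine Finset.sum_congr rfl fun p _ => ?_
  rw [phiFun, ← tsum_div_const]
  refine tsum_congr fun j => ?_
  change _ = (cantorDigit d a x (j * d + p) : ℝ) / 3 ^ (j * d + p + 1)
  rw [cantorDigit_mul_add, div_div, ← pow_add, Nat.mul_comm d j]
  push_cast
  ring_nf

lemma binaryDigit_eq_of_cantorDigit_eq {m : ℕ}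
    (h : ∀ k < m, cantorDigit d a x k = cantorDigit d a y k) (p : Fin d) (j : ℕ)
    (hj : j < m / d) : a (x p) j = a (y p) j := by
  have hlt : j * d + p < m := calc
    j * d + p < (j + 1) * d := by rw [add_mul, one_mul]; exact Nat.add_lt_add_left p.isLt _
    _ ≤ m / d * d := Nat.mul_le_mul_right d hj
    _ ≤ m := Nat.div_mul_le_self m d
  have := h _ hlt
  rw [cantorDigit_mul_add, cantorDigit_mul_add] at this
  omega

lemma inv_three_pow_le_abs_PhiFun_sub (hx : ∀ p j, a (x p) j ≤ 1) (hy : ∀ p j, a (y p) j ≤ 1)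
    {m : ℕ} (hm : ∀ k < m, cantorDigit d a x k = cantorDigit d a y k)
    (hne : cantorDigit d a x m ≠ cantorDigit d a y m) :
    (1 / 3 : ℝ) ^ (m + 1) ≤ |PhiFun d a x - PhiFun d a y| := by
  have hgap : |(cantorDigit d a x m : ℝ) - cantorDigit d a y m| = 2 := by
    obtain ⟨u, hu, hxu⟩ : ∃ u ≤ 1, a (x (Fin.ofNat d m)) (m / d) = u := ⟨_, hx _ _, rfl⟩
    obtain ⟨v, hv, hyv⟩ : ∃ v ≤ 1, a (y (Fin.ofNat d m)) (m / d) = v := ⟨_, hy _ _, rfl⟩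
    rw [cantorDigit, cantorDigit, hxu, hyv] at hne ⊢
    interval_cases u <;> interval_cases v
    all_goals first | exact absurd rfl hne | norm_num
  have hsep := le_abs_tsum_div_pow (b := 3) (m := m)
    (c := fun k => (cantorDigit d a x k : ℝ) - cantorDigit d a y k) (by norm_num)
    (fun k => abs_natCast_sub_le (cantorDigit_le hx k) (cantorDigit_le hy k))
    fun k hk => by simp only [hm k hk, sub_self]
  rw [PhiFun_eq_tsum_cantorDigit hx, PhiFun_eq_tsum_cantorDigit hy,
    tsum_natCast_div_pow_sub (by norm_num) (cantorDigit_le hx) (cantorDigit_le hy)]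
  refine le_trans (le_of_eq ?_) hsep
  rw [hgap, one_div_pow]
  norm_num

lemma eq_of_cantorDigit_eq (ha : IsBinaryExp a) (hx : x ∈ cube d) (hy : y ∈ cube d)
    (h : ∀ m, cantorDigit d a x m = cantorDigit d a y m) : x = y := by
  funext p
  have hdigit (j : ℕ) : a (x p) j = a (y p) j := by
    have := h (j * d + p)
    rw [cantorDigit_mul_add, cantorDigit_mul_add] at this
    omega
  rw [(ha _ (hx p)).2, (ha _ (hy p)).2]
  simp only [hdigit]

lemma norm_sub_le_two_mul_abs_PhiFun_sub_rpow (ha : IsBinaryExp a) (hx : x ∈ cube d)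
    (hy : y ∈ cube d) :
    ‖x - y‖ ≤ 2 * |PhiFun d a x - PhiFun d a y| ^ (Real.log 2 / (d * Real.log 3)) := by
  classical
  by_cases hall : ∀ m, cantorDigit d a x m = cantorDigit d a y m
  · rw [eq_of_cantorDigit_eq ha hx hy hall, sub_self, norm_zero]
    positivity
  push Not at hall
  let m := Nat.find hall
  have hmin : ∀ k < m, cantorDigit d a x k = cantorDigit d a y k :=
    fun k hk => not_not.1 (Nat.find_min hall hk)
  have hxa : ∀ p j, a (x p) j ≤ 1 := fun p => (ha _ (hx p)).1
  have hya : ∀ p j, a (y p) j ≤ 1 := fun p => (ha _ (hy p)).1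
  refine (pi_norm_le_iff_of_nonneg (by positivity)).2 fun p => ?_
  calc ‖x p - y p‖ ≤ (1 / 2) ^ (m / d) :=
        abs_sub_le_of_binaryDigit_eq ha (hx p) (hy p) (binaryDigit_eq_of_cantorDigit_eq hmin p)
    _ ≤ 2 * ((1 / 3 : ℝ) ^ (m + 1)) ^ (Real.log 2 / (d * Real.log 3)) :=
        half_pow_div_le (Nat.pos_of_neZero d) m
    _ ≤ 2 * |PhiFun d a x - PhiFun d a y| ^ (Real.log 2 / (d * Real.log 3)) := by
        gcongr
        exact inv_three_pow_le_abs_PhiFun_sub hxa hya hmin (Nat.find_spec hall)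

end CantorDigits

theorem stmt8 (d : ℕ) (hd : 2 ≤ d) (β Q : ℝ) (hβ0 : 0 < β) (hQ : 0 < Q)
    (a : ℝ → ℕ → ℕ) (ha : IsBinaryExp a) (f : (Fin d → ℝ) → ℝ)
    (hf : ∀ x ∈ cube d, ∀ y ∈ cube d, |f x - f y| ≤ Q * ‖x - y‖ ^ β) :
    ∀ x ∈ PhiFun d a '' cube d, ∀ y ∈ PhiFun d a '' cube d,
      |f (Function.invFunOn (PhiFun d a) (cube d) x) -
          f (Function.invFunOn (PhiFun d a) (cube d) y)|
        ≤ 2 ^ β * Q * |x - y| ^ (β * Real.log 2 / (d * Real.log 3)) := by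
  have : NeZero d := ⟨by omega⟩
  rintro _ ⟨x, hx, rfl⟩ _ ⟨y, hy, rfl⟩
  set x' := Function.invFunOn (PhiFun d a) (cube d) (PhiFun d a x)
  set y' := Function.invFunOn (PhiFun d a) (cube d) (PhiFun d a y)
  have hx' : x' ∈ cube d := Function.invFunOn_mem ⟨x, hx, rfl⟩
  have hy' : y' ∈ cube d := Function.invFunOn_mem ⟨y, hy, rfl⟩
  have hnorm := norm_sub_le_two_mul_abs_PhiFun_sub_rpow ha hx' hy'
  rw [Function.invFunOn_eq (f := PhiFun d a) ⟨x, hx, rfl⟩,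
    Function.invFunOn_eq (f := PhiFun d a) ⟨y, hy, rfl⟩] at hnorm
  calc |f x' - f y'| ≤ Q * ‖x' - y'‖ ^ β := hf x' hx' y' hy'
    _ ≤ Q * (2 * |PhiFun d a x - PhiFun d a y| ^ (Real.log 2 / (d * Real.log 3))) ^ β := by
        gcongr
    _ = 2 ^ β * Q * |PhiFun d a x - PhiFun d a y| ^ (β * Real.log 2 / (d * Real.log 3)) := by
        rw [Real.mul_rpow zero_le_two (by positivity), ← Real.rpow_mul (abs_nonneg _)]
        ring_nf

end
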